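/- (Absolute-value bound on the gradient product of the one-dimensional discrete heat kernel.) For t ≥ 0 and x ∈ ℤ let p_t(x) := (1/(2π))·∫_{−π}^{π} e^{t(cos k − 1)}·cos(kx) dk, and define ∇⁺f(x) := f(x+1) − f(x) and ∇⁻f(x) := f(x−1) − f(x). Then Σ_{x ∈ ℤ} ∫_0^∞ |∇⁺p_t(x)·∇⁻p_t(x)| dt < 1. -/

import Mathlib

open MeasureTheory

/-- The transition probability of the continuous-time simple symmetric random walk on `ℤ`
with generator `½Δ`, given by its Fourier formula. -/
noncomputable def hk1 (t : ℝ) (x : ℤ) : ℝ :=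
  (1 / (2 * Real.pi)) * ∫ k in Set.Icc (-Real.pi) Real.pi,
    Real.exp (t * (Real.cos k - 1)) * Real.cos (k * (x : ℝ))

/-!
By Parseval, `Σₓ (∇⁺p_t(x))² ≤ E(t) := (2π)⁻¹ ∫ 2(1 - cos k) e^{2t(cos k - 1)} dk`, and by Fubini
`∫₀^∞ E(t) dt ≤ 1`. With `a = ∇⁺p_t(x)` and `b = ∇⁺p_t(x - 1) = -∇⁻p_t(x)`, the identity
`|a| |b| = (a² + b²)/2 - (|a| - |b|)²/2` bounds `Σₓ |∇⁺p_t(x) ∇⁻p_t(x)|` by `E(t)` minus the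
defect `Σₓ (|a| - |b|)²/2`. Since `p_t = δ₀ + O(t)`, we have `∇⁺p_t(0) ≈ -1` and `∇⁺p_t(1) ≈ 0`,
so the defect is at least `1/8` for `t ≤ 1/8`, and the whole quantity is at most `1 - 1/64`.
-/

open Real Set

lemma abs_exp_sub_one_le_neg {u : ℝ} (hu : u ≤ 0) : |exp u - 1| ≤ -u := by
  rw [abs_sub_comm, abs_of_nonneg (sub_nonneg.mpr (exp_le_one_iff.mpr hu))]
  linarith [add_one_le_exp u]

lemma integrableOn_neg_mul_exp_mul_Ioi {a : ℝ} (ha : a ≤ 0) :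
    IntegrableOn (fun t => -a * exp (a * t)) (Ioi 0) := by
  rcases ha.lt_or_eq with ha | rfl
  · exact (integrableOn_exp_mul_Ioi ha 0).const_mul _
  · simp

lemma integral_neg_mul_exp_mul_Ioi_le {a : ℝ} (ha : a ≤ 0) :
    ∫ t in Ioi 0, -a * exp (a * t) ≤ 1 := by
  rcases ha.lt_or_eq with ha | rfl
  · rw [integral_const_mul, integral_exp_mul_Ioi ha, mul_zero, exp_zero]
    exact (show -a * (-1 / a) = 1 by field_simp [ha.ne]).le
  · simp

lemma sum_abs_mul_abs_sub_one_le {f : ℤ → ℝ} {E : ℝ} (hf : ∀ s : Finset ℤ, ∑ x ∈ s, f x ^ 2 ≤ E)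
    (s : Finset ℤ) :
    ∑ x ∈ s, |f x| * |f (x - 1)| ≤ E - ∑ x ∈ s, (|f x| - |f (x - 1)|) ^ 2 / 2 := by
  have hshift : ∑ x ∈ s, f (x - 1) ^ 2 ≤ E := by
    simpa [Finset.sum_map] using hf (s.map (Equiv.subRight (1 : ℤ)).toEmbedding)
  have hpoint (x : ℤ) : |f x| * |f (x - 1)|
      = f x ^ 2 / 2 + f (x - 1) ^ 2 / 2 - (|f x| - |f (x - 1)|) ^ 2 / 2 := by
    rw [← sq_abs (f x), ← sq_abs (f (x - 1))]
    ring
  simp only [hpoint, Finset.sum_sub_distrib, Finset.sum_add_distrib, ← Finset.sum_div]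
  linarith [hf s]

lemma hk1_eq_intervalIntegral (t : ℝ) (x : ℤ) :
    hk1 t x = (2 * π)⁻¹ * ∫ k in -π..π, exp (t * (cos k - 1)) * cos (k * x) := by
  rw [hk1, one_div, intervalIntegral.integral_of_le (by linarith [pi_pos]),
    integral_Icc_eq_integral_Ioc]

lemma continuous_hk1 (x : ℤ) : Continuous (hk1 · x) :=
  continuous_const.mul <| continuous_parametric_integral_of_continuous (by fun_prop) isCompact_Icc

lemma inv_two_pi_mul_integral_cos_int_mul (x : ℤ) :
    (2 * π)⁻¹ * ∫ k in -π..π, cos (k * x) = if x = 0 then 1 else 0 := by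
  split_ifs with hx
  · simp [hx, two_mul, pi_ne_zero]
  · have hx' : (x : ℝ) ≠ 0 := Int.cast_ne_zero.mpr hx
    rw [intervalIntegral.integral_comp_mul_right cos hx', integral_cos, neg_mul, sin_neg,
      mul_comm π, sin_int_mul_pi]
    simp

lemma abs_hk1_sub_ite_le {t : ℝ} (ht : 0 ≤ t) (x : ℤ) :
    |hk1 t x - if x = 0 then 1 else 0| ≤ t := by
  have hpi := pi_pos
  have hdiff : hk1 t x - (if x = 0 then 1 else 0)
      = (2 * π)⁻¹ * ∫ k in -π..π, (exp (t * (cos k - 1)) - 1) * cos (k * x) := by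
    simp_rw [sub_mul, one_mul]
    rw [hk1_eq_intervalIntegral, ← inv_two_pi_mul_integral_cos_int_mul,
      intervalIntegral.integral_sub (Continuous.intervalIntegrable (by fun_prop) _ _)
        (Continuous.intervalIntegrable (by fun_prop) _ _), mul_sub]
  have hbound : |∫ k in -π..π, (exp (t * (cos k - 1)) - 1) * cos (k * x)|
      ≤ ∫ k in -π..π, t * (1 - cos k) := by
    rw [← Real.norm_eq_abs]
    refine intervalIntegral.norm_integral_le_of_norm_le (by linarith)
      (Filter.Eventually.of_forall fun k _ => ?_)
      ((by fun_prop : Continuous fun k => t * (1 - cos k)).intervalIntegrable _ _)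
    have hcos := cos_le_one k
    have hexp := abs_exp_sub_one_le_neg
      (mul_nonpos_of_nonneg_of_nonpos ht (by linarith : cos k - 1 ≤ 0))
    rw [Real.norm_eq_abs, abs_mul]
    calc |exp (t * (cos k - 1)) - 1| * |cos (k * x)| ≤ t * (1 - cos k) * 1 :=
          mul_le_mul (hexp.trans_eq (by ring)) (abs_cos_le_one _) (abs_nonneg _)
            (mul_nonneg ht (by linarith))
      _ = t * (1 - cos k) := mul_one _
  have hmean : ∫ k in -π..π, t * (1 - cos k) = t * (2 * π) := by
    simp [integral_cos, two_mul]
  rw [hdiff, abs_mul, abs_of_pos (by positivity)]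
  calc (2 * π)⁻¹ * |∫ k in -π..π, (exp (t * (cos k - 1)) - 1) * cos (k * x)|
      ≤ (2 * π)⁻¹ * (t * (2 * π)) := by rw [← hmean]; gcongr
    _ = t := by field_simp

noncomputable def hk1Grad (t : ℝ) (x : ℤ) : ℝ := hk1 t (x + 1) - hk1 t x

lemma continuous_hk1Grad (x : ℤ) : Continuous (hk1Grad · x) :=
  (continuous_hk1 _).sub (continuous_hk1 _)

lemma abs_hk1Grad_mul_abs_hk1Grad_sub_one (t : ℝ) (x : ℤ) :
    |hk1Grad t x| * |hk1Grad t (x - 1)|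
      = |(hk1 t (x + 1) - hk1 t x) * (hk1 t (x - 1) - hk1 t x)| := by
  rw [abs_mul, hk1Grad, hk1Grad, sub_add_cancel, abs_sub_comm (hk1 t x)]

lemma hk1Grad_eq_intervalIntegral (t : ℝ) (x : ℤ) :
    hk1Grad t x = (2 * π)⁻¹ *
      ∫ k in -π..π, exp (t * (cos k - 1)) * (cos (k * (x + 1)) - cos (k * x)) := by
  rw [hk1Grad, hk1_eq_intervalIntegral, hk1_eq_intervalIntegral, ← mul_sub,
    ← intervalIntegral.integral_sub (Continuous.intervalIntegrable (by fun_prop) _ _)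
      (Continuous.intervalIntegrable (by fun_prop) _ _)]
  push_cast
  simp_rw [mul_sub]

lemma one_eighth_le_sq_abs_hk1Grad_sub {t : ℝ} (ht₀ : 0 ≤ t) (ht : t ≤ 1 / 8) :
    1 / 8 ≤ (|hk1Grad t 1| - |hk1Grad t 0|) ^ 2 / 2 := by
  have h₀ := abs_le.mp (abs_hk1_sub_ite_le ht₀ 0)
  have h₁ := abs_le.mp (abs_hk1_sub_ite_le ht₀ 1)
  have h₂ := abs_le.mp (abs_hk1_sub_ite_le ht₀ 2)
  simp only [if_true, one_ne_zero, two_ne_zero, if_false, sub_zero] at h₀ h₁ h₂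
  have hg₀ : 3 / 4 ≤ |hk1Grad t 0| := by
    rw [hk1Grad, zero_add, abs_sub_comm]
    exact le_abs.mpr (Or.inl (by linarith))
  have hg₁ : |hk1Grad t 1| ≤ 1 / 4 := by
    rw [hk1Grad, one_add_one_eq_two, abs_le]
    constructor <;> linarith
  nlinarith [abs_nonneg (hk1Grad t 1)]

/-- Fourier symbol of `∇⁺p_t`: `hk1Grad t x = Re ((2π)⁻¹ ∫ e^{ikx} hk1GradSymbol t k dk)`. -/
noncomputable def hk1GradSymbol (t k : ℝ) : ℂ :=
  exp (t * (cos k - 1)) * (Complex.exp (k * Complex.I) - 1)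

noncomputable def hk1GradEnergyDensity (t k : ℝ) : ℝ :=
  2 * (1 - cos k) * exp (2 * (cos k - 1) * t)

noncomputable def hk1GradEnergy (t : ℝ) : ℝ :=
  (2 * π)⁻¹ * ∫ k in Ioc (-π) π, hk1GradEnergyDensity t k

@[fun_prop]
lemma continuous_hk1GradSymbol (t : ℝ) : Continuous (hk1GradSymbol t) := by
  unfold hk1GradSymbol
  fun_prop

lemma norm_hk1GradSymbol_sq (t k : ℝ) :
    ‖hk1GradSymbol t k‖ ^ 2 = hk1GradEnergyDensity t k := by
  have hexp : ‖Complex.exp (k * Complex.I) - 1‖ ^ 2 = 2 * (1 - cos k) := by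
    rw [Complex.sq_norm, Complex.normSq_apply, Complex.sub_re, Complex.sub_im,
      Complex.exp_ofReal_mul_I_re, Complex.exp_ofReal_mul_I_im]
    simp only [Complex.one_re, Complex.one_im, sub_zero]
    linear_combination sin_sq_add_cos_sq k
  rw [hk1GradSymbol, norm_mul, mul_pow, Complex.norm_real, Real.norm_eq_abs, sq_abs,
    ← exp_nat_mul, hexp, hk1GradEnergyDensity]
  ring_nf

lemma re_fourierCoeffOn_hk1GradSymbol (t : ℝ) (x : ℤ) :
    (fourierCoeffOn (neg_lt_self pi_pos) (hk1GradSymbol t) (-x)).re = hk1Grad t x := by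
  have hphase (k : ℝ) : 2 * π * Complex.I * x * k / ↑(π - -π) = ↑(k * x) * Complex.I := by
    push_cast
    field_simp
    ring
  have hre (k : ℝ) : (Complex.exp (↑(k * x) * Complex.I) * hk1GradSymbol t k).re
      = exp (t * (cos k - 1)) * (cos (k * (x + 1)) - cos (k * x)) := by
    rw [hk1GradSymbol, mul_left_comm, Complex.re_ofReal_mul, mul_sub (Complex.exp _), mul_one,
      ← Complex.exp_add, ← add_mul, ← Complex.ofReal_add, Complex.sub_re,
      Complex.exp_ofReal_mul_I_re, Complex.exp_ofReal_mul_I_re, mul_add_one]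
  rw [fourierCoeffOn_eq_integral, neg_neg]
  simp_rw [fourier_coe_apply, hphase, smul_eq_mul]
  rw [Complex.smul_re, ← Complex.reCLM_apply,
    ← Complex.reCLM.intervalIntegral_comp_comm (Continuous.intervalIntegrable (by fun_prop) _ _)]
  simp only [Complex.reCLM_apply, hre, hk1Grad_eq_intervalIntegral, sub_neg_eq_add, ← two_mul,
    one_div, smul_eq_mul]

lemma sum_sq_hk1Grad_le (t : ℝ) (s : Finset ℤ) :
    ∑ x ∈ s, hk1Grad t x ^ 2 ≤ hk1GradEnergy t := by
  have hpi := pi_pos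
  have hL2 : MemLp (hk1GradSymbol t) 2 (volume.restrict (Ioc (-π) π)) := by
    obtain ⟨C, hC⟩ := isCompact_Icc.exists_bound_of_continuousOn
      (continuous_hk1GradSymbol t).continuousOn
    exact MemLp.of_bound (continuous_hk1GradSymbol t).aestronglyMeasurable C
      (ae_restrict_of_forall_mem measurableSet_Ioc fun k hk => hC k (Ioc_subset_Icc_self hk))
  have hParseval := hasSum_sq_fourierCoeffOn (neg_lt_self hpi) hL2
  simp only [norm_hk1GradSymbol_sq, sub_neg_eq_add, ← two_mul, smul_eq_mul,
    intervalIntegral.integral_of_le (neg_le_self hpi.le)] at hParseval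
  calc ∑ x ∈ s, hk1Grad t x ^ 2
      ≤ ∑ x ∈ s, ‖fourierCoeffOn (neg_lt_self hpi) (hk1GradSymbol t) (-x)‖ ^ 2 := by
        refine Finset.sum_le_sum fun x _ => ?_
        rw [← re_fourierCoeffOn_hk1GradSymbol, ← sq_abs]
        gcongr
        exact Complex.abs_re_le_norm _
    _ = ∑ n ∈ s.map (Equiv.neg ℤ).toEmbedding,
          ‖fourierCoeffOn (neg_lt_self hpi) (hk1GradSymbol t) n‖ ^ 2 := by
        simp [Finset.sum_map]
    _ ≤ hk1GradEnergy t := sum_le_hasSum _ (fun _ _ => sq_nonneg _) hParseval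

lemma hk1GradEnergyDensity_eq (t k : ℝ) :
    hk1GradEnergyDensity t k = -(2 * (cos k - 1)) * exp (2 * (cos k - 1) * t) := by
  rw [hk1GradEnergyDensity]
  ring

lemma hk1GradEnergyDensity_nonneg (t k : ℝ) : 0 ≤ hk1GradEnergyDensity t k :=
  mul_nonneg (by linarith [cos_le_one k]) (exp_nonneg _)

lemma integral_hk1GradEnergyDensity_Ioi_le (k : ℝ) :
    ∫ t in Ioi 0, hk1GradEnergyDensity t k ≤ 1 := by
  simpa only [hk1GradEnergyDensity_eq]
    using integral_neg_mul_exp_mul_Ioi_le (by linarith [cos_le_one k] : 2 * (cos k - 1) ≤ 0)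

lemma continuous_hk1GradEnergyDensity : Continuous (Function.uncurry hk1GradEnergyDensity) := by
  unfold Function.uncurry hk1GradEnergyDensity
  fun_prop

lemma integrable_hk1GradEnergyDensity :
    Integrable (Function.uncurry hk1GradEnergyDensity)
      ((volume.restrict (Ioi 0)).prod (volume.restrict (Ioc (-π) π))) := by
  rw [integrable_prod_iff' continuous_hk1GradEnergyDensity.aestronglyMeasurable]
  refine ⟨Filter.Eventually.of_forall fun k => ?_, ?_⟩
  · simp only [Function.uncurry_apply_pair, hk1GradEnergyDensity_eq]
    exact integrableOn_neg_mul_exp_mul_Ioi (by linarith [cos_le_one k])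
  · refine (integrable_const (1 : ℝ)).mono'
      continuous_hk1GradEnergyDensity.norm.stronglyMeasurable.integral_prod_left'.aestronglyMeasurable
      (Filter.Eventually.of_forall fun k => ?_)
    simp only [Function.uncurry_apply_pair, Real.norm_eq_abs,
      abs_of_nonneg (hk1GradEnergyDensity_nonneg _ _)]
    rw [abs_of_nonneg (integral_nonneg fun t => hk1GradEnergyDensity_nonneg t k)]
    exact integral_hk1GradEnergyDensity_Ioi_le k

lemma integrableOn_hk1GradEnergy : IntegrableOn hk1GradEnergy (Ioi 0) :=
  integrable_hk1GradEnergyDensity.integral_prod_left.const_mul _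

lemma integral_hk1GradEnergy_le : ∫ t in Ioi 0, hk1GradEnergy t ≤ 1 := by
  have hpi := pi_pos
  simp only [hk1GradEnergy]
  rw [integral_const_mul, integral_integral_swap integrable_hk1GradEnergyDensity]
  calc (2 * π)⁻¹ * ∫ k in Ioc (-π) π, ∫ t in Ioi 0, hk1GradEnergyDensity t k
      ≤ (2 * π)⁻¹ * ∫ k in Ioc (-π) π, (1 : ℝ) :=
        mul_le_mul_of_nonneg_left (setIntegral_mono_on
          integrable_hk1GradEnergyDensity.integral_prod_right
          (integrableOn_const (C := (1 : ℝ)) measure_Ioc_lt_top.ne) measurableSet_Ioc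
          fun k _ => integral_hk1GradEnergyDensity_Ioi_le k) (by positivity)
    _ = 1 := by
        rw [setIntegral_const, smul_eq_mul, mul_one,
          Real.volume_real_Ioc_of_le (neg_le_self hpi.le)]
        field_simp
        ring

lemma sum_abs_hk1Grad_mul_le_sub_indicator {t : ℝ} (ht : 0 < t) {s : Finset ℤ} (hs : 1 ∈ s) :
    ∑ x ∈ s, |hk1Grad t x| * |hk1Grad t (x - 1)|
      ≤ hk1GradEnergy t - (Ioc 0 (1 / 8)).indicator (fun _ => 1 / 8) t := by
  have hjump : (Ioc 0 (1 / 8)).indicator (fun _ => 1 / 8) t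
      ≤ (|hk1Grad t 1| - |hk1Grad t (1 - 1)|) ^ 2 / 2 := by
    by_cases h8 : t ≤ 1 / 8
    · rw [indicator_of_mem (show t ∈ Ioc 0 (1 / 8) from ⟨ht, h8⟩), sub_self]
      exact one_eighth_le_sq_abs_hk1Grad_sub ht.le h8
    · rw [indicator_of_notMem fun h => h8 h.2]
      positivity
  have hdefect := Finset.single_le_sum
    (f := fun x => (|hk1Grad t x| - |hk1Grad t (x - 1)|) ^ 2 / 2) (fun _ _ => by positivity) hs
  linarith [sum_abs_mul_abs_sub_one_le (sum_sq_hk1Grad_le t) s]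

lemma integrableOn_abs_hk1Grad_mul (x : ℤ) :
    IntegrableOn (fun t => |hk1Grad t x| * |hk1Grad t (x - 1)|) (Ioi 0) := by
  refine integrableOn_hk1GradEnergy.mono'
    ((continuous_hk1Grad x).abs.mul (continuous_hk1Grad _).abs).aestronglyMeasurable
    (Filter.Eventually.of_forall fun t => ?_)
  have h := sum_abs_mul_abs_sub_one_le (sum_sq_hk1Grad_le t) {x}
  simp only [Finset.sum_singleton] at h
  rw [Real.norm_of_nonneg (by positivity)]
  linarith [sq_nonneg (|hk1Grad t x| - |hk1Grad t (x - 1)|)]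

lemma sum_integral_abs_hk1Grad_mul_le (s : Finset ℤ) :
    ∑ x ∈ s, ∫ t in Ioi 0, |hk1Grad t x| * |hk1Grad t (x - 1)| ≤ 63 / 64 := by
  have hind : ∫ t in Ioi (0 : ℝ), (Ioc 0 (1 / 8)).indicator (fun _ => (1 / 8 : ℝ)) t = 1 / 64 := by
    rw [integral_indicator_const _ measurableSet_Ioc, measureReal_restrict_apply measurableSet_Ioc,
      inter_eq_left.mpr Ioc_subset_Ioi_self, Real.volume_real_Ioc_of_le (by norm_num)]
    norm_num
  have hindInt : IntegrableOn ((Ioc (0 : ℝ) (1 / 8)).indicator fun _ => (1 / 8 : ℝ)) (Ioi 0) :=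
    ((integrableOn_const (C := (1 / 8 : ℝ)) measure_Ioc_lt_top.ne).integrable_indicator
      measurableSet_Ioc).integrableOn
  calc ∑ x ∈ s, ∫ t in Ioi 0, |hk1Grad t x| * |hk1Grad t (x - 1)|
      ≤ ∑ x ∈ insert 1 s, ∫ t in Ioi 0, |hk1Grad t x| * |hk1Grad t (x - 1)| :=
        Finset.sum_le_sum_of_subset_of_nonneg (Finset.subset_insert _ _)
          fun _ _ _ => integral_nonneg fun _ => by positivity
    _ = ∫ t in Ioi 0, ∑ x ∈ insert 1 s, |hk1Grad t x| * |hk1Grad t (x - 1)| :=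
        (integral_finsetSum _ fun x _ => integrableOn_abs_hk1Grad_mul x).symm
    _ ≤ ∫ t in Ioi 0, (hk1GradEnergy t - (Ioc 0 (1 / 8)).indicator (fun _ => 1 / 8) t) :=
        setIntegral_mono_on (integrable_finsetSum _ fun x _ => integrableOn_abs_hk1Grad_mul x)
          (integrableOn_hk1GradEnergy.sub hindInt) measurableSet_Ioi
          fun t ht => sum_abs_hk1Grad_mul_le_sub_indicator ht (Finset.mem_insert_self _ _)
    _ ≤ 63 / 64 := by
        rw [integral_sub integrableOn_hk1GradEnergy hindInt, hind]
        linarith [integral_hk1GradEnergy_le]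

theorem stmt10 :
    ∑' x : ℤ, ∫ t in Set.Ioi (0:ℝ),
      |(hk1 t (x+1) - hk1 t x) * (hk1 t (x-1) - hk1 t x)| < 1 := by
  simp_rw [← abs_hk1Grad_mul_abs_hk1Grad_sub_one]
  calc _ ≤ (63 / 64 : ℝ) := tsum_le_of_sum_le' (by norm_num) sum_integral_abs_hk1Grad_mul_le
    _ < 1 := by norm_num
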